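/- Under the bijection (α, β) ↦ (M, V) = (α/(α+β), αβ/((α+β)²(α+β+1))), the region 0 < α < 1 and 0 < β < 1 is mapped exactly onto {(M,V) : M ∈ (0,1), max(M²(1-M)/(1+M), M(1-M)²/(2-M)) < V < M - M²}. -/

import Mathlib

noncomputable def toMV (p : ℝ × ℝ) : ℝ × ℝ :=
  (p.1 / (p.1 + p.2), p.1 * p.2 / ((p.1 + p.2) ^ 2 * (p.1 + p.2 + 1)))

noncomputable def C₁ (M : ℝ) : ℝ := M ^ 2 * (1 - M) / (1 + M)
noncomputable def C₂ (M : ℝ) : ℝ := M * (1 - M) ^ 2 / (2 - M)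

/-!
Write `α = M s`, `β = (1 - M) s` with `s = α + β`. Then `toMV (α, β) = (M, M (1 - M) / (s + 1))`,
so for fixed `M ∈ (0, 1)` the variance is a decreasing function of `s > 0` with supremum `M - M²`.
The constraints `α < 1` and `β < 1` read `s < 1 / M` and `s < 1 / (1 - M)`, and the values of
the variance at these two endpoints are exactly `C₁ M` and `C₂ M`.
-/

open Set

lemma toMV_mul_one_sub_mul (M : ℝ) {s : ℝ} (hs : s ≠ 0) (hs₁ : s + 1 ≠ 0) :
    toMV (M * s, (1 - M) * s) = (M, M * (1 - M) / (s + 1)) := by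
  simp only [toMV, show M * s + (1 - M) * s = s by ring, Prod.mk.injEq]
  constructor <;> field_simp

lemma exists_eq_mul_one_sub_mul {α β : ℝ} (hα : 0 < α) (hβ : 0 < β) :
    ∃ M s, M ∈ Ioo (0 : ℝ) 1 ∧ 0 < s ∧ α = M * s ∧ β = (1 - M) * s := by
  have hs : 0 < α + β := by linarith
  refine ⟨α / (α + β), α + β, ⟨div_pos hα hs, (div_lt_one hs).2 (by linarith)⟩, hs,
    by field_simp, ?_⟩
  field_simp
  ring

lemma div_inv_add_one_lt_div_add_one_iff {c t s : ℝ} (hc : 0 < c) (ht : 0 < t)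
    (hs : 0 < s + 1) : c / (t⁻¹ + 1) < c / (s + 1) ↔ t * s < 1 := by
  rw [div_lt_div_iff_of_pos_left hc (by positivity) hs, add_lt_add_iff_right,
    ← lt_inv_mul_iff₀ ht, mul_one]

lemma div_add_one_lt_self_iff {c s : ℝ} (hc : 0 < c) (hs : 0 < s + 1) :
    c / (s + 1) < c ↔ 0 < s := by
  rw [div_lt_iff₀ hs, lt_mul_iff_one_lt_right hc, lt_add_iff_pos_left]

section

variable {M : ℝ} (hM : M ∈ Ioo (0 : ℝ) 1)
include hM

lemma C₁_pos : 0 < C₁ M :=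
  div_pos (mul_pos (pow_pos hM.1 2) (by linarith [hM.2])) (by linarith [hM.1])

lemma C₁_lt_iff {s : ℝ} (hs : 0 < s + 1) : C₁ M < M * (1 - M) / (s + 1) ↔ M * s < 1 := by
  obtain ⟨hM₀, hM₁⟩ := hM
  have hC₁ : C₁ M = M * (1 - M) / (M⁻¹ + 1) := by
    unfold C₁
    field_simp
  rw [hC₁, div_inv_add_one_lt_div_add_one_iff (by nlinarith) hM₀ hs]

lemma C₂_lt_iff {s : ℝ} (hs : 0 < s + 1) :
    C₂ M < M * (1 - M) / (s + 1) ↔ (1 - M) * s < 1 := by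
  obtain ⟨hM₀, hM₁⟩ := hM
  have hC₂ : C₂ M = M * (1 - M) / ((1 - M)⁻¹ + 1) := by
    have : 1 - M ≠ 0 := by linarith
    have : 2 - M ≠ 0 := by linarith
    unfold C₂
    field_simp
    ring
  rw [hC₂, div_inv_add_one_lt_div_add_one_iff (by nlinarith) (by linarith) hs]

end

theorem image_Ushaped :
    toMV '' (Set.Ioo (0:ℝ) 1 ×ˢ Set.Ioo (0:ℝ) 1) =
      {q : ℝ × ℝ | q.1 ∈ Set.Ioo (0:ℝ) 1 ∧
        max (C₁ q.1) (C₂ q.1) < q.2 ∧ q.2 < q.1 - q.1 ^ 2} := by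
  ext ⟨M, V⟩
  simp only [mem_image, mem_prod, Prod.exists, mem_ofPred_eq, max_lt_iff,
    show M - M ^ 2 = M * (1 - M) by ring]
  constructor
  · rintro ⟨_, _, ⟨⟨hα₀, hα₁⟩, hβ₀, hβ₁⟩, hMV⟩
    obtain ⟨M', s, hM', hs, rfl, rfl⟩ := exists_eq_mul_one_sub_mul hα₀ hβ₀
    rw [toMV_mul_one_sub_mul M' hs.ne' (by linarith), Prod.mk.injEq] at hMV
    obtain ⟨rfl, rfl⟩ := hMV
    have hs₁ : 0 < s + 1 := by linarith
    refine ⟨hM', ⟨(C₁_lt_iff hM' hs₁).2 hα₁, (C₂_lt_iff hM' hs₁).2 hβ₁⟩, ?_⟩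
    exact (div_add_one_lt_self_iff (mul_pos hM'.1 (sub_pos.2 hM'.2)) hs₁).2 hs
  · rintro ⟨hM, ⟨hC₁, hC₂⟩, hVlt⟩
    have hc : 0 < M * (1 - M) := mul_pos hM.1 (sub_pos.2 hM.2)
    have hV : 0 < V := (C₁_pos hM).trans hC₁
    set s := M * (1 - M) / V - 1
    have hs₁ : 0 < s + 1 := by simp only [s, sub_add_cancel]; positivity
    have hVs : V = M * (1 - M) / (s + 1) := by
      simp only [s, sub_add_cancel]; rw [div_div_cancel₀ hc.ne']
    rw [hVs] at hC₁ hC₂ hVlt ⊢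
    have hs : 0 < s := (div_add_one_lt_self_iff hc hs₁).1 hVlt
    refine ⟨M * s, (1 - M) * s, ⟨⟨mul_pos hM.1 hs, (C₁_lt_iff hM hs₁).1 hC₁⟩,
      ⟨mul_pos (sub_pos.2 hM.2) hs, (C₂_lt_iff hM hs₁).1 hC₂⟩⟩, ?_⟩
    exact toMV_mul_one_sub_mul M hs.ne' hs₁.ne'
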